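/- For n ≥ 2, the null-filiform associative algebra μ₀ⁿ admits a local derivation which is not a derivation. -/
import Mathlib



/-- basis vectors -/
noncomputable def e (n : ℕ) (i : Fin n) : Fin n → ℂ := Pi.single i 1

/-- product of the null-filiform algebra μ₀ⁿ (0-based indices: index a ↔ e_{a+1}) -/
noncomputable def mul0 (n : ℕ) (x y : Fin n → ℂ) : Fin n → ℂ :=
  fun k => ∑ i : Fin n, ∑ j : Fin n,
    if (i : ℕ) + (j : ℕ) + 1 = (k : ℕ) then x i * y j else 0

def IsDer {n : ℕ} (μ : (Fin n → ℂ) → (Fin n → ℂ) → Fin n → ℂ)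
    (D : (Fin n → ℂ) →ₗ[ℂ] (Fin n → ℂ)) : Prop :=
  ∀ x y, D (μ x y) = μ (D x) y + μ x (D y)

def IsLocDer {n : ℕ} (μ : (Fin n → ℂ) → (Fin n → ℂ) → Fin n → ℂ)
    (Δ : (Fin n → ℂ) →ₗ[ℂ] (Fin n → ℂ)) : Prop :=
  ∀ x, ∃ D, IsDer μ D ∧ Δ x = D x

/-- the submodule of derivations, given bilinearity of μ -/
noncomputable def derSubmodule (n : ℕ) (μ : (Fin n → ℂ) → (Fin n → ℂ) → Fin n → ℂ)
    (hal : ∀ x y z, μ (x + y) z = μ x z + μ y z)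
    (har : ∀ x y z, μ x (y + z) = μ x y + μ x z)
    (hsl : ∀ (c : ℂ) x y, μ (c • x) y = c • μ x y)
    (hsr : ∀ (c : ℂ) x y, μ x (c • y) = c • μ x y) :
    Submodule ℂ ((Fin n → ℂ) →ₗ[ℂ] (Fin n → ℂ)) where
  carrier := {D | IsDer μ D}
  zero_mem' := by
    intro x y
    have h1 : μ 0 y = 0 := by simpa using hsl 0 0 y
    have h2 : μ x 0 = 0 := by simpa using hsr 0 x 0
    simp [h1, h2]
  add_mem' := by
    intro D1 D2 h1 h2 x y
    simp only [LinearMap.add_apply, h1 x y, h2 x y, hal, har]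
    abel
  smul_mem' := by
    intro c D hD x y
    simp only [LinearMap.smul_apply, hD x y, smul_add, hsl, hsr]

/-- the submodule of local derivations, given bilinearity of μ -/
noncomputable def locDerSubmodule (n : ℕ) (μ : (Fin n → ℂ) → (Fin n → ℂ) → Fin n → ℂ)
    (hal : ∀ x y z, μ (x + y) z = μ x z + μ y z)
    (har : ∀ x y z, μ x (y + z) = μ x y + μ x z)
    (hsl : ∀ (c : ℂ) x y, μ (c • x) y = c • μ x y)
    (hsr : ∀ (c : ℂ) x y, μ x (c • y) = c • μ x y) :
    Submodule ℂ ((Fin n → ℂ) →ₗ[ℂ] (Fin n → ℂ)) where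
  carrier := {Δ | IsLocDer μ Δ}
  zero_mem' := by
    intro x
    exact ⟨0, (derSubmodule n μ hal har hsl hsr).zero_mem, rfl⟩
  add_mem' := by
    intro D1 D2 h1 h2 x
    obtain ⟨E1, hE1, he1⟩ := h1 x
    obtain ⟨E2, hE2, he2⟩ := h2 x
    exact ⟨E1 + E2, (derSubmodule n μ hal har hsl hsr).add_mem hE1 hE2, by
      simp [he1, he2]⟩
  smul_mem' := by
    intro c Δ hΔ x
    obtain ⟨E, hE, he⟩ := hΔ x
    exact ⟨c • E, (derSubmodule n μ hal har hsl hsr).smul_mem c hE, by simp [he]⟩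

lemma mul0_add_left (n : ℕ) (x y z : Fin n → ℂ) :
    mul0 n (x + y) z = mul0 n x z + mul0 n y z := by
  funext k
  simp only [mul0, Pi.add_apply]
  rw [← Finset.sum_add_distrib]
  refine Finset.sum_congr rfl fun i _ => ?_
  rw [← Finset.sum_add_distrib]
  refine Finset.sum_congr rfl fun j _ => ?_
  split <;> ring

lemma mul0_add_right (n : ℕ) (x y z : Fin n → ℂ) :
    mul0 n x (y + z) = mul0 n x y + mul0 n x z := by
  funext k
  simp only [mul0, Pi.add_apply]
  rw [← Finset.sum_add_distrib]
  refine Finset.sum_congr rfl fun i _ => ?_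
  rw [← Finset.sum_add_distrib]
  refine Finset.sum_congr rfl fun j _ => ?_
  split <;> ring

lemma mul0_smul_left (n : ℕ) (c : ℂ) (x y : Fin n → ℂ) :
    mul0 n (c • x) y = c • mul0 n x y := by
  funext k
  simp only [mul0, Pi.smul_apply, smul_eq_mul, Finset.mul_sum]
  refine Finset.sum_congr rfl fun i _ => ?_
  refine Finset.sum_congr rfl fun j _ => ?_
  split <;> ring

lemma mul0_smul_right (n : ℕ) (c : ℂ) (x y : Fin n → ℂ) :
    mul0 n x (c • y) = c • mul0 n x y := by
  funext k
  simp only [mul0, Pi.smul_apply, smul_eq_mul, Finset.mul_sum]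
  refine Finset.sum_congr rfl fun i _ => ?_
  refine Finset.sum_congr rfl fun j _ => ?_
  split <;> ring


-- helper sum collapse lemma
lemma collapse (n k j t : ℕ) (hk : k < n) (c : ℂ) :
    (∑ a : Fin n, if (a : ℕ) + j = k ∧ t = (a : ℕ) then c else 0)
      = if t + j = k then c else 0 := by
  by_cases h : t + j = k
  · have ht : t < n := by omega
    rw [if_pos h]
    have : ∀ a : Fin n, (((a:ℕ) + j = k ∧ t = (a:ℕ)) ↔ a = ⟨t, ht⟩) := by
      intro a
      constructor
      · rintro ⟨h1, h2⟩; exact Fin.ext h2.symm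
      · rintro rfl; exact ⟨h, rfl⟩
    simp only [this]
    simp
  · rw [if_neg h]
    apply Finset.sum_eq_zero
    intro a _
    rw [if_neg]
    rintro ⟨h1, h2⟩
    omega

noncomputable def Dmap (n j : ℕ) : (Fin n → ℂ) →ₗ[ℂ] (Fin n → ℂ) where
  toFun x := fun m => ∑ a : Fin n, if (a : ℕ) + j = (m : ℕ) then ((a : ℕ) + 1 : ℂ) * x a else 0
  map_add' x y := by
    funext m
    simp only [Pi.add_apply, ← Finset.sum_add_distrib]
    refine Finset.sum_congr rfl fun a _ => ?_
    split <;> ring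
  map_smul' c x := by
    funext m
    simp only [Pi.smul_apply, smul_eq_mul, RingHom.id_apply, Finset.mul_sum]
    refine Finset.sum_congr rfl fun a _ => ?_
    split <;> ring

lemma ite_sum {ι : Type*} {P : Prop} [Decidable P] (s : Finset ι) (f : ι → ℂ) :
    (if P then ∑ i ∈ s, f i else 0) = ∑ i ∈ s, if P then f i else 0 := by
  split <;> simp

lemma Dmap_isDer (n j : ℕ) : IsDer (mul0 n) (Dmap n j) := by
  intro x y
  funext k
  simp only [Dmap, mul0, LinearMap.coe_mk, AddHom.coe_mk, Pi.add_apply]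
  have hk : (k : ℕ) < n := k.isLt
  -- LHS
  have lhs : (∑ a : Fin n, if (a:ℕ) + j = (k:ℕ) then ((a:ℕ)+1 : ℂ) *
        (∑ p : Fin n, ∑ q : Fin n, if (p:ℕ)+(q:ℕ)+1 = (a:ℕ) then x p * y q else 0) else 0)
      = ∑ p : Fin n, ∑ q : Fin n,
          if (p:ℕ)+(q:ℕ)+1+j = (k:ℕ) then (((p:ℕ)+(q:ℕ)+2 : ℂ)) * (x p * y q) else 0 := by
    have step : ∀ a : Fin n, (if (a:ℕ) + j = (k:ℕ) then ((a:ℕ)+1 : ℂ) *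
        (∑ p : Fin n, ∑ q : Fin n, if (p:ℕ)+(q:ℕ)+1 = (a:ℕ) then x p * y q else 0) else 0)
        = ∑ p : Fin n, ∑ q : Fin n,
            if (a:ℕ) + j = (k:ℕ) ∧ (p:ℕ)+(q:ℕ)+1 = (a:ℕ)
            then (((p:ℕ)+(q:ℕ)+2 : ℂ)) * (x p * y q) else 0 := by
      intro a
      rw [Finset.mul_sum, ite_sum]
      refine Finset.sum_congr rfl fun p _ => ?_
      rw [Finset.mul_sum, ite_sum]
      refine Finset.sum_congr rfl fun q _ => ?_
      by_cases hA : (a:ℕ) + j = (k:ℕ)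
      · by_cases hB : (p:ℕ)+(q:ℕ)+1 = (a:ℕ)
        · rw [if_pos hA, if_pos hB, if_pos ⟨hA, hB⟩]
          have ha : ((a:ℕ) : ℂ) = ((p:ℕ) : ℂ) + ((q:ℕ) : ℂ) + 1 := by exact_mod_cast hB.symm
          rw [ha]; ring
        · rw [if_pos hA, if_neg hB, if_neg (by tauto), mul_zero]
      · rw [if_neg hA, if_neg (by tauto)]
    simp only [step]
    rw [Finset.sum_comm]
    refine Finset.sum_congr rfl fun p _ => ?_
    rw [Finset.sum_comm]
    refine Finset.sum_congr rfl fun q _ => ?_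
    have := collapse n (k:ℕ) j ((p:ℕ)+(q:ℕ)+1) hk (((p:ℕ)+(q:ℕ)+2 : ℂ) * (x p * y q))
    rw [← this]
  have rhs1 : (∑ p : Fin n, ∑ q : Fin n, if (p:ℕ)+(q:ℕ)+1 = (k:ℕ)
        then (∑ a : Fin n, if (a:ℕ)+j = (p:ℕ) then ((a:ℕ)+1:ℂ) * x a else 0) * y q else 0)
      = ∑ p : Fin n, ∑ q : Fin n,
          if (p:ℕ)+(q:ℕ)+1+j = (k:ℕ) then ((p:ℕ)+1:ℂ) * (x p * y q) else 0 := by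
    have step : ∀ p q : Fin n, (if (p:ℕ)+(q:ℕ)+1 = (k:ℕ)
        then (∑ a : Fin n, if (a:ℕ)+j = (p:ℕ) then ((a:ℕ)+1:ℂ) * x a else 0) * y q else 0)
        = ∑ a : Fin n, if (p:ℕ) + ((q:ℕ)+1) = (k:ℕ) ∧ (a:ℕ)+j = (p:ℕ)
            then ((a:ℕ)+1:ℂ) * (x a * y q) else 0 := by
      intro p q
      rw [Finset.sum_mul, ite_sum]
      refine Finset.sum_congr rfl fun a _ => ?_
      by_cases hC : (p:ℕ)+(q:ℕ)+1 = (k:ℕ)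
      · by_cases hB : (a:ℕ)+j = (p:ℕ)
        · rw [if_pos hC, if_pos hB, if_pos ⟨by omega, hB⟩]; ring
        · rw [if_pos hC, if_neg hB, if_neg (by tauto), zero_mul]
      · rw [if_neg hC, if_neg (by rintro ⟨h1, -⟩; omega)]
    simp only [step]
    rw [Finset.sum_comm]
    have h2 : ∀ q : Fin n, (∑ p : Fin n, ∑ a : Fin n,
          if (p:ℕ) + ((q:ℕ)+1) = (k:ℕ) ∧ (a:ℕ)+j = (p:ℕ)
            then ((a:ℕ)+1:ℂ) * (x a * y q) else 0)
        = ∑ a : Fin n, if (a:ℕ)+j+((q:ℕ)+1) = (k:ℕ)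
            then ((a:ℕ)+1:ℂ) * (x a * y q) else 0 := by
      intro q
      rw [Finset.sum_comm]
      exact Finset.sum_congr rfl fun a _ => collapse n (k:ℕ) ((q:ℕ)+1) ((a:ℕ)+j) hk _
    simp only [h2]
    rw [Finset.sum_comm]
    exact Finset.sum_congr rfl fun p _ => Finset.sum_congr rfl fun q _ =>
      if_congr (by omega) rfl rfl
  have rhs2 : (∑ p : Fin n, ∑ q : Fin n, if (p:ℕ)+(q:ℕ)+1 = (k:ℕ)
        then x p * (∑ a : Fin n, if (a:ℕ)+j = (q:ℕ) then ((a:ℕ)+1:ℂ) * y a else 0) else 0)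
      = ∑ p : Fin n, ∑ q : Fin n,
          if (p:ℕ)+(q:ℕ)+1+j = (k:ℕ) then ((q:ℕ)+1:ℂ) * (x p * y q) else 0 := by
    have step : ∀ p q : Fin n, (if (p:ℕ)+(q:ℕ)+1 = (k:ℕ)
        then x p * (∑ a : Fin n, if (a:ℕ)+j = (q:ℕ) then ((a:ℕ)+1:ℂ) * y a else 0) else 0)
        = ∑ a : Fin n, if (q:ℕ) + ((p:ℕ)+1) = (k:ℕ) ∧ (a:ℕ)+j = (q:ℕ)
            then ((a:ℕ)+1:ℂ) * (x p * y a) else 0 := by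
      intro p q
      rw [Finset.mul_sum, ite_sum]
      refine Finset.sum_congr rfl fun a _ => ?_
      by_cases hC : (p:ℕ)+(q:ℕ)+1 = (k:ℕ)
      · by_cases hB : (a:ℕ)+j = (q:ℕ)
        · rw [if_pos hC, if_pos hB, if_pos ⟨by omega, hB⟩]; ring
        · rw [if_pos hC, if_neg hB, if_neg (by tauto), mul_zero]
      · rw [if_neg hC, if_neg (by rintro ⟨h1, -⟩; omega)]
    simp only [step]
    have h2 : ∀ p : Fin n, (∑ q : Fin n, ∑ a : Fin n,
          if (q:ℕ) + ((p:ℕ)+1) = (k:ℕ) ∧ (a:ℕ)+j = (q:ℕ)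
            then ((a:ℕ)+1:ℂ) * (x p * y a) else 0)
        = ∑ a : Fin n, if (a:ℕ)+j+((p:ℕ)+1) = (k:ℕ)
            then ((a:ℕ)+1:ℂ) * (x p * y a) else 0 := by
      intro p
      rw [Finset.sum_comm]
      exact Finset.sum_congr rfl fun a _ => collapse n (k:ℕ) ((p:ℕ)+1) ((a:ℕ)+j) hk _
    simp only [h2]
    exact Finset.sum_congr rfl fun p _ => Finset.sum_congr rfl fun q _ =>
      if_congr (by omega) rfl rfl
  rw [lhs, rhs1, rhs2, ← Finset.sum_add_distrib]
  refine Finset.sum_congr rfl fun p _ => ?_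
  rw [← Finset.sum_add_distrib]
  refine Finset.sum_congr rfl fun q _ => ?_
  split <;> ring


lemma mul0_e (n : ℕ) (i j k : Fin n) :
    mul0 n (e n i) (e n j) k = if (i:ℕ)+(j:ℕ)+1 = (k:ℕ) then 1 else 0 := by
  simp only [mul0, e]
  rw [Finset.sum_eq_single i]
  · rw [Finset.sum_eq_single j]
    · simp [Pi.single_eq_same]
    · intro b _ hb; simp [Pi.single_eq_of_ne hb]
    · simp
  · intro a _ ha; apply Finset.sum_eq_zero; intro b _; simp [Pi.single_eq_of_ne ha]
  · simp

theorem stmt9 (n : ℕ) (hn : 2 ≤ n) :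
    ∃ Δ : (Fin n → ℂ) →ₗ[ℂ] (Fin n → ℂ),
      IsLocDer (mul0 n) Δ ∧ ¬ IsDer (mul0 n) Δ := by
  have hL : n - 1 < n := by omega
  set L : Fin n := ⟨n - 1, hL⟩ with hLdef
  set S := derSubmodule n (mul0 n) (mul0_add_left n) (mul0_add_right n)
      (mul0_smul_left n) (mul0_smul_right n) with hSdef
  refine ⟨(LinearMap.proj L).smulRight (e n L), ?_, ?_⟩
  · -- local derivation
    intro x
    by_cases hx : x = 0
    · exact ⟨0, S.zero_mem, by simp [hx]⟩
    · obtain ⟨i, hi⟩ := Function.ne_iff.mp hx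
      have hs : (Finset.univ.filter (fun i => x i ≠ 0)).Nonempty :=
        ⟨i, by simpa using hi⟩
      set k₀ := (Finset.univ.filter (fun i => x i ≠ 0)).min' hs with hk₀def
      have hk₀ : x k₀ ≠ 0 := by
        have := Finset.min'_mem _ hs
        simpa using (Finset.mem_filter.mp this).2
      have hmin : ∀ i : Fin n, (i:ℕ) < (k₀:ℕ) → x i = 0 := by
        intro a ha
        by_contra h
        have := Finset.min'_le (Finset.univ.filter (fun i => x i ≠ 0)) a (by simp [h])
        rw [Fin.le_def] at this
        omega
      set j := n - 1 - (k₀ : ℕ) with hjdef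
      set c := x L / ((((k₀:ℕ) : ℂ) + 1) * x k₀) with hcdef
      have hden : (((k₀:ℕ) : ℂ) + 1) * x k₀ ≠ 0 :=
        mul_ne_zero (Nat.cast_add_one_ne_zero (k₀:ℕ)) hk₀
      refine ⟨c • Dmap n j, S.smul_mem c (Dmap_isDer n j), ?_⟩
      funext m
      simp only [LinearMap.smulRight_apply, LinearMap.proj_apply, LinearMap.smul_apply,
        Dmap, LinearMap.coe_mk, AddHom.coe_mk, Pi.smul_apply, smul_eq_mul]
      have hsum : (∑ a : Fin n, if (a:ℕ)+j = (m:ℕ) then ((a:ℕ)+1:ℂ) * x a else 0)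
          = if (m:ℕ) = n-1 then (((k₀:ℕ):ℂ)+1) * x k₀ else 0 := by
        by_cases hm : (m:ℕ) = n - 1
        · rw [if_pos hm]
          rw [Finset.sum_eq_single k₀]
          · rw [if_pos (by have := k₀.isLt; omega : (k₀:ℕ)+j = (m:ℕ))]
          · intro a _ ha
            rw [if_neg]
            intro hc
            exact ha (Fin.ext (by have := a.isLt; have := k₀.isLt; omega))
          · intro h; exact absurd (Finset.mem_univ k₀) h
        · rw [if_neg hm]
          apply Finset.sum_eq_zero
          intro a _
          by_cases hc : (a:ℕ)+j = (m:ℕ)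
          · rw [if_pos hc]
            have hak : (a:ℕ) < (k₀:ℕ) := by
              have := m.isLt
              have := k₀.isLt
              omega
            rw [hmin a hak, mul_zero]
          · rw [if_neg hc]
      rw [hsum]
      by_cases hm : (m:ℕ) = n - 1
      · rw [if_pos hm]
        have hmL : m = L := Fin.ext (by simpa using hm)
        rw [hmL]
        have he : e n L L = 1 := Pi.single_eq_same L 1
        rw [he, mul_one, hcdef]
        field_simp
      · rw [if_neg hm, mul_zero]
        have hmL : m ≠ L := by
          intro h
          apply hm
          rw [h]
        have he : e n L m = 0 := Pi.single_eq_of_ne hmL 1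
        rw [he, mul_zero]
  · -- not a derivation
    intro hD
    set i0 : Fin n := ⟨0, by omega⟩ with hi0def
    set j0 : Fin n := ⟨n-2, by omega⟩ with hj0def
    have hmul : mul0 n (e n i0) (e n j0) = e n L := by
      funext k
      rw [mul0_e]
      have hiff : ((i0:ℕ)+(j0:ℕ)+1 = (k:ℕ)) ↔ k = L := by
        simp only [hi0def, hj0def, hLdef, Fin.ext_iff]
        omega
      rw [if_congr hiff rfl rfl]
      simp [e, Pi.single_apply]
    have h1 := hD (e n i0) (e n j0)
    rw [hmul] at h1
    simp only [LinearMap.smulRight_apply, LinearMap.proj_apply] at h1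
    have e1 : e n L L = 1 := Pi.single_eq_same L 1
    have e2 : e n i0 L = 0 := Pi.single_eq_of_ne (by simp [hi0def, hLdef, Fin.ext_iff]; omega) 1
    have e3 : e n j0 L = 0 := Pi.single_eq_of_ne (by simp [hj0def, hLdef, Fin.ext_iff]; omega) 1
    rw [e1, e2, e3, zero_smul, one_smul] at h1
    have z1 : mul0 n 0 (e n j0) = 0 := by
      have := mul0_smul_left n 0 0 (e n j0)
      simpa using this
    have z2 : mul0 n (e n i0) 0 = 0 := by
      have := mul0_smul_right n 0 (e n i0) 0
      simpa using this
    rw [z1, z2, add_zero] at h1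
    have := congrFun h1 L
    rw [e1] at this
    exact one_ne_zero this
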